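/- Let p ≥ 1 and N ≥ 1 be integers, q ∈ ℂ∖{0} with q^p = 1, and χ the residue of N modulo p, 0 ≤ χ ≤ p−1. Let a, t, Q : ℂ∖{0} → ℂ be functions with t(−λ) = t(λ) for all λ ≠ 0, define d(λ) := q^N a(−λq), and assume the Baxter equation t(λ)Q(λ) = a(λ)Q(λq^{−1}) + d(λ)Q(λq) holds for all λ ≠ 0. Then the function Q̄(λ) := λ^{χ} Q(−λ) satisfies the conjugate Baxter equation t(λ)Q̄(λ) = d(λ/q)Q̄(λq^{−1}) + a(λq)Q̄(λq) for all λ ≠ 0. -/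
import Mathlib


/-- Let `q^p = 1`, `χ = N mod p`, `t` even, `d(λ) = q^N a(-λq)`, and suppose
the Baxter equation `t(λ)Q(λ) = a(λ)Q(λq^{-1}) + d(λ)Q(λq)` holds for all `λ ≠ 0`. Then
`Q̄(λ) = λ^χ Q(-λ)` satisfies the conjugate Baxter equation
`t(λ)Q̄(λ) = d(λ/q)Q̄(λq^{-1}) + a(λq)Q̄(λq)` for all `λ ≠ 0`. -/
theorem statement18 (p N : ℕ) (hp : 1 ≤ p) (hN : 1 ≤ N) (q : ℂ) (hq0 : q ≠ 0)
    (hqp : q ^ p = 1) (a t Q d : ℂ → ℂ)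
    (ht : ∀ lam : ℂ, lam ≠ 0 → t (-lam) = t lam)
    (hd : ∀ lam : ℂ, d lam = q ^ N * a (-(lam * q)))
    (hBax : ∀ lam : ℂ, lam ≠ 0 →
      t lam * Q lam = a lam * Q (lam * q⁻¹) + d lam * Q (lam * q)) :
    ∀ lam : ℂ, lam ≠ 0 →
      t lam * (lam ^ (N % p) * Q (-lam)) =
        d (lam / q) * ((lam * q⁻¹) ^ (N % p) * Q (-(lam * q⁻¹))) +
          a (lam * q) * ((lam * q) ^ (N % p) * Q (-(lam * q))) := by
  intro lam hl
  have hqN : q ^ N = q ^ (N % p) := by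
    conv_lhs => rw [← Nat.mod_add_div N p, pow_add, pow_mul, hqp, one_pow, mul_one]
  have hB := hBax (-lam) (neg_ne_zero.mpr hl)
  rw [ht lam hl, hd] at hB
  have h1 : t lam * (lam ^ (N % p) * Q (-lam)) = lam ^ (N % p) * (t lam * Q (-lam)) := by
    ring
  rw [h1, hB, hd, div_mul_cancel₀ lam hq0]
  simp only [neg_mul, neg_neg, hqN, mul_pow, inv_pow]
  field_simp
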